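/- arXiv:1909.13035 — 7 statements merged into one kernel-verified Lean document; each statement's English description precedes it below -/
import Mathlib

section
/- Let 0 < η < 1. Then every complex number λ satisfying (λ−1)³ + 3η(λ−1)² + 2η²(1+η)(λ−1) + 2η³ = 0 has modulus |λ| < √((1 − η + η²)(1 + η − η²)). In particular every eigenvalue of the iteration matrix M = [[1, 0, η], [0, 1−2η, −η], [−η, −η(1−2η), 1−η]] has modulus strictly less than √((1 − η + η²)(1 + η − η²)) < 1. -/
/-!
With `w = λ - 1 + η` the characteristic cubic becomes the depressed cubic
`w³ - η²(1 - 2η) w + 2η³(1 - η) = 0`, and the claimed bound is `|λ|² < 1 - η²(1 - η)²`.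
A real root `w` of the depressed cubic lies in `(max (-8η/5) (-3(1 - η)), 0)`. On that interval
the real eigenvalue `1 - η + w` is below the bound, and so is the common squared modulus
`(1 - η + u)² + v²` of a non-real pair `1 - η + u ± iv`, for which the vanishing imaginary part
of the cubic forces `v² = 3u² - η²(1 - 2η)` and makes `w = -2u` the real root.
-/

open Complex

theorem depressed_cubic_re_im_eq_zero {p q : ℝ} {w : ℂ} (hw : w ^ 3 + p * w + q = 0) :
    w.re ^ 3 - 3 * w.re * w.im ^ 2 + p * w.re + q = 0 ∧
      w.im * (3 * w.re ^ 2 - w.im ^ 2 + p) = 0 := by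
  have hre := congrArg Complex.re hw
  have him := congrArg Complex.im hw
  simp only [pow_succ, pow_zero, one_mul, add_re, add_im, mul_re, mul_im, ofReal_re,
    ofReal_im, zero_re, zero_im] at hre him
  exact ⟨by linear_combination hre, by linear_combination him⟩

section ShiftedCubic

variable {η w : ℝ}

theorem shifted_root_neg (h0 : 0 < η) (h1 : η < 1)
    (hw : w ^ 3 - η ^ 2 * (1 - 2 * η) * w + 2 * η ^ 3 * (1 - η) = 0) : w < 0 := by
  by_contra! h
  have hq : 0 < η ^ 3 * (1 - η) := by have := sub_pos.2 h1; positivity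
  rcases le_or_gt (1 / 2) η with hη | hη
  · nlinarith [pow_nonneg h 3,
      mul_nonneg (mul_nonneg (sq_nonneg η) (by linarith : (0 : ℝ) ≤ 2 * η - 1)) h]
  · nlinarith [mul_nonneg (sq_nonneg (w - η)) (by linarith : (0 : ℝ) ≤ w + 2 * η), pow_nonneg h 3]

theorem neg_eight_mul_lt_five_mul_shifted_root (h0 : 0 < η) (h1 : η < 1)
    (hw : w ^ 3 - η ^ 2 * (1 - 2 * η) * w + 2 * η ^ 3 * (1 - η) = 0) : -8 * η < 5 * w := by
  by_contra! h
  have hq : 0 < η ^ 3 * (1 - η) := by have := sub_pos.2 h1; positivity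
  have hquad : 0 ≤ 25 * w ^ 2 - 40 * η * w + 64 * η ^ 2 - 25 * η ^ 2 * (1 - 2 * η) := by
    nlinarith [sq_nonneg (5 * w - 4 * η)]
  nlinarith [mul_nonpos_of_nonpos_of_nonneg (by linarith : 5 * w + 8 * η ≤ 0) hquad]

theorem neg_three_mul_lt_shifted_root (h0 : 0 < η) (h1 : η < 1)
    (hw : w ^ 3 - η ^ 2 * (1 - 2 * η) * w + 2 * η ^ 3 * (1 - η) = 0) : -3 * (1 - η) < w := by
  by_contra! h
  have hq : 0 < η ^ 3 * (1 - η) := by have := sub_pos.2 h1; positivity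
  have hquad : 0 ≤ w ^ 2 - 3 * (1 - η) * w + 9 * (1 - η) ^ 2 - η ^ 2 * (1 - 2 * η) := by
    nlinarith [sq_nonneg (2 * w - 3 * (1 - η)), sq_nonneg (1 - η), sq_nonneg η, mul_pos h0 h0]
  have hrem : 0 < 27 * (1 - η) ^ 2 - 3 * η ^ 2 + 4 * η ^ 3 := by
    nlinarith [sq_nonneg (16 * (1 - η) - 3 / 2), mul_nonneg (sq_nonneg (1 - η)) h0.le]
  nlinarith [mul_nonpos_of_nonpos_of_nonneg (by linarith : w + 3 * (1 - η) ≤ 0) hquad,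
    mul_pos (mul_pos h0 h0) hrem]

theorem real_eigenvalue_sq_lt (h0 : 0 < η) (h1 : η < 1)
    (hw : w ^ 3 - η ^ 2 * (1 - 2 * η) * w + 2 * η ^ 3 * (1 - η) = 0) :
    (1 - η + w) ^ 2 < 1 - η ^ 2 * (1 - η) ^ 2 := by
  have hneg := shifted_root_neg h0 h1 hw
  have hlow := neg_eight_mul_lt_five_mul_shifted_root h0 h1 hw
  have hlow' := neg_three_mul_lt_shifted_root h0 h1 hw
  have hsq : 5 * w ^ 2 ≤ 8 * η * -w := by nlinarith
  rcases le_or_gt η (5 / 9) with hη | hη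
  · nlinarith [mul_nonneg (by linarith : (0 : ℝ) ≤ -w) (by linarith : (0 : ℝ) ≤ 10 - 18 * η)]
  · nlinarith [mul_nonneg (by linarith : (0 : ℝ) ≤ w + 3 * (1 - η))
      (by linarith : (0 : ℝ) ≤ 18 * η - 10), sq_nonneg (1 - η)]

theorem nonreal_eigenvalue_normSq_lt (h0 : 0 < η) (h1 : η < 1)
    (hw : w ^ 3 - η ^ 2 * (1 - 2 * η) * w + 2 * η ^ 3 * (1 - η) = 0) :
    (1 - η - w / 2) ^ 2 + (3 * (w / 2) ^ 2 - η ^ 2 * (1 - 2 * η)) < 1 - η ^ 2 * (1 - η) ^ 2 := by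
  have hneg := shifted_root_neg h0 h1 hw
  have hlow := neg_eight_mul_lt_five_mul_shifted_root h0 h1 hw
  have hsq : 5 * w ^ 2 ≤ 8 * η * -w := by nlinarith
  by_contra! h
  have hK : 2 * η - η ^ 2 - η ^ 4 ≤ w ^ 2 - (1 - η) * w := by nlinarith
  -- `hK` bounds `-w` from below, `hK` combined with the cubic bounds it from above,
  -- and the two bounds are incompatible.
  have hlower : 5 * η * (1 - η) * (2 + η + η ^ 2) ≤ (5 + 3 * η) * -w := by nlinarith
  have hupper : η * (2 - 2 * η + 10 * η ^ 2 - 5 * η ^ 3) * -w ≤ 10 * η ^ 3 * (1 - η) := by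
    nlinarith [mul_nonneg (sub_nonneg.2 hK) (by linarith : (0 : ℝ) ≤ -w),
      mul_le_mul_of_nonneg_left hsq (by linarith : (0 : ℝ) ≤ 1 - η)]
  have hc : 0 < 2 - 2 * η + 10 * η ^ 2 - 5 * η ^ 3 := by nlinarith
  have hcross : (2 + η + η ^ 2) * (2 - 2 * η + 10 * η ^ 2 - 5 * η ^ 3) ≤ 2 * η * (5 + 3 * η) := by
    have hε : 0 < 5 * η ^ 2 * (1 - η) := by have := sub_pos.2 h1; positivity
    refine le_of_mul_le_mul_left ?_ hε
    nlinarith [mul_le_mul_of_nonneg_left hlower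
        (by positivity : 0 ≤ η * (2 - 2 * η + 10 * η ^ 2 - 5 * η ^ 3)),
      mul_le_mul_of_nonneg_left hupper (by linarith : (0 : ℝ) ≤ 5 + 3 * η)]
  nlinarith [sq_nonneg (η - 1 / 2), mul_pos h0 (sub_pos.2 h1)]

end ShiftedCubic

theorem normSq_lt_of_charCubic_eq_zero {η : ℝ} (h0 : 0 < η) (h1 : η < 1) {lam : ℂ}
    (hlam : (lam - 1) ^ 3 + 3 * (η : ℂ) * (lam - 1) ^ 2
      + 2 * (η : ℂ) ^ 2 * (1 + (η : ℂ)) * (lam - 1) + 2 * (η : ℂ) ^ 3 = 0) :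
    normSq lam < 1 - η ^ 2 * (1 - η) ^ 2 := by
  set w := lam - 1 + η with hw_def
  have hw : w ^ 3 + ((-(η ^ 2 * (1 - 2 * η)) : ℝ) : ℂ) * w
      + ((2 * η ^ 3 * (1 - η) : ℝ) : ℂ) = 0 := by
    push_cast
    linear_combination hlam
  have hlam_re : lam.re = 1 - η + w.re := by simp [hw_def]
  have hlam_im : lam.im = w.im := by simp [hw_def]
  obtain ⟨hre, him⟩ := depressed_cubic_re_im_eq_zero hw
  rw [normSq_apply, hlam_re, hlam_im, ← sq, ← sq]
  rcases eq_or_ne w.im 0 with hreal | hnonreal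
  · rw [hreal] at hre ⊢
    have := real_eigenvalue_sq_lt h0 h1 (w := w.re) (by linear_combination hre)
    linarith
  · have him_sq : w.im ^ 2 = 3 * w.re ^ 2 - η ^ 2 * (1 - 2 * η) := by
      linear_combination -(mul_eq_zero.mp him).resolve_left hnonreal
    have := nonreal_eigenvalue_normSq_lt h0 h1 (w := -2 * w.re)
      (by linear_combination hre + 3 * w.re * him_sq)
    rw [him_sq]
    convert this using 2 <;> ring

def iterationMatrix (η : ℝ) : Matrix (Fin 3) (Fin 3) ℂ :=
  !![(1 : ℂ), 0, (η : ℂ);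
     0, 1 - 2 * (η : ℂ), -(η : ℂ);
     -(η : ℂ), -(η : ℂ) * (1 - 2 * (η : ℂ)), 1 - (η : ℂ)]

theorem eval_charpoly_iterationMatrix (η : ℝ) (lam : ℂ) :
    (iterationMatrix η).charpoly.eval lam = (lam - 1) ^ 3 + 3 * (η : ℂ) * (lam - 1) ^ 2
      + 2 * (η : ℂ) ^ 2 * (1 + (η : ℂ)) * (lam - 1) + 2 * (η : ℂ) ^ 3 := by
  rw [Matrix.eval_charpoly, Matrix.scalar_apply, Matrix.diagonal_fin_three, iterationMatrix,
    Matrix.det_fin_three]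
  simp only [Matrix.sub_apply, Matrix.of_apply, Matrix.cons_val', Matrix.cons_val_zero,
    Matrix.cons_val_fin_one, Matrix.cons_val_one, Matrix.cons_val_two, Matrix.tail_cons,
    Matrix.head_cons, Matrix.head_fin_const]
  ring

theorem charCubic_eq_zero_of_hasEigenvalue {η : ℝ} {lam : ℂ}
    (h : Module.End.HasEigenvalue (Matrix.toLin' (iterationMatrix η)) lam) :
    (lam - 1) ^ 3 + 3 * (η : ℂ) * (lam - 1) ^ 2
      + 2 * (η : ℂ) ^ 2 * (1 + (η : ℂ)) * (lam - 1) + 2 * (η : ℂ) ^ 3 = 0 := by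
  rw [Module.End.hasEigenvalue_iff_isRoot_charpoly, Matrix.charpoly_toLin'] at h
  rw [← eval_charpoly_iterationMatrix]
  exact h

/-- For `0 < η < 1`, every complex root `λ` of the characteristic cubic
`(λ−1)³ + 3η(λ−1)² + 2η²(1+η)(λ−1) + 2η³ = 0` satisfies
`|λ| < √((1 − η + η²)(1 + η − η²))`; in particular every eigenvalue of the iteration
matrix `M` has modulus strictly less than this bound, which is `< 1`. -/
theorem stmt2 (η : ℝ) (hη0 : 0 < η) (hη1 : η < 1)
    (M : Matrix (Fin 3) (Fin 3) ℂ)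
    (hM : M = !![(1 : ℂ), 0, (η : ℂ);
                 0, 1 - 2 * (η : ℂ), -(η : ℂ);
                 -(η : ℂ), -(η : ℂ) * (1 - 2 * (η : ℂ)), 1 - (η : ℂ)]) :
    (∀ lam : ℂ,
      (lam - 1) ^ 3 + 3 * (η : ℂ) * (lam - 1) ^ 2
          + 2 * (η : ℂ) ^ 2 * (1 + (η : ℂ)) * (lam - 1) + 2 * (η : ℂ) ^ 3 = 0 →
        ‖lam‖ < Real.sqrt ((1 - η + η ^ 2) * (1 + η - η ^ 2))) ∧
    (∀ lam : ℂ,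
      Module.End.HasEigenvalue (Matrix.toLin' M) lam →
        ‖lam‖ < Real.sqrt ((1 - η + η ^ 2) * (1 + η - η ^ 2))) ∧
    Real.sqrt ((1 - η + η ^ 2) * (1 + η - η ^ 2)) < 1 := by
  have hρ : (1 - η + η ^ 2) * (1 + η - η ^ 2) = 1 - η ^ 2 * (1 - η) ^ 2 := by ring
  have hroot : ∀ lam : ℂ,
      (lam - 1) ^ 3 + 3 * (η : ℂ) * (lam - 1) ^ 2
          + 2 * (η : ℂ) ^ 2 * (1 + (η : ℂ)) * (lam - 1) + 2 * (η : ℂ) ^ 3 = 0 →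
        ‖lam‖ < Real.sqrt ((1 - η + η ^ 2) * (1 + η - η ^ 2)) := fun lam hlam => by
    rw [norm_def, hρ]
    exact Real.sqrt_lt_sqrt (normSq_nonneg lam) (normSq_lt_of_charCubic_eq_zero hη0 hη1 hlam)
  refine ⟨hroot, fun lam h => hroot lam ?_, ?_⟩
  · subst hM
    exact charCubic_eq_zero_of_hasEigenvalue h
  rw [hρ, Real.sqrt_lt' one_pos]
  have : 0 < η * (1 - η) := mul_pos hη0 (sub_pos.2 hη1)
  nlinarith
end

section
/- (Proposition 1) Let 0 < η < 1 and consider the objective l(θ, ψ, φ) = ψ − ψ·θ + (1/2)(1 + φ)² + (1/2)(θ + φ)² (the Stein Bridging toy objective with λ₁ = λ₂ = 1), optimized by alternate SGD: ψ_{t+1} = ψ_t + η(1 − θ_t), φ_{t+1} = φ_t − η(1 + θ_t + 2φ_t), θ_{t+1} = θ_t − η(−ψ_{t+1} + θ_t + φ_{t+1}). Then the squared norm N_t = ψ_t² + (θ_t − 1)² + (φ_t + 1)² decreases geometrically: there exists a constant C ≥ 0 (depending on η and the initialization) such that N_t ≤ C·((1 − η + η²)(1 + η − η²))^t = C·(1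 − η²(1−η)²)^t for all t; in particular (ψ_t, θ_t, φ_t) converges to the optimum (0, 1, −1). -/
/-!
Centre the iterates at the optimum: `u = ψ`, `v = θ - 1`, `w = φ + 1`. One step of alternate SGD
is then a linear map, and the quadratic form `Q = lyapunov η` is a Lyapunov function for it: by an
explicit identity, `ρ Q(x) - Q(step x)` is `η (1 - η)` times a sum of squares whose coefficients
are nonnegative polynomials on `[0, 1]`, where `ρ = (1 - η + η²)(1 + η - η²)`. So `Q` decays
like `ρ ^ t`, and since `Q` dominates `(1 - η²) / 7` times the squared distance to the optimum,
so does that distance.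
-/

open Filter Topology

def lyapunov (η u v w : ℝ) : ℝ :=
  2 * (u - η * v) ^ 2 + 2 * (v + η ^ 2 * w) ^ 2 + (1 - η ^ 2) * (1 + 2 * η ^ 2) * w ^ 2

section

variable {η : ℝ}

theorem rate_mul_lyapunov_sub_lyapunov_step {u v w u' v' w' : ℝ} (hu : u' = u - η * v)
    (hw : w' = w - η * (v + 2 * w)) (hv : v' = v - η * (-u' + v + w')) :
    (1 - η + η ^ 2) * (1 + η - η ^ 2) * lyapunov η u v w - lyapunov η u' v' w' =
      η * (1 - η) * (η ^ 2 * (2 * u - (1 + η) * v - (1 - 2 * η) * w) ^ 2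
        + (3 - 5 * η + 9 * η ^ 2 - 9 * η ^ 3 + 4 * η ^ 4) * (v + w) ^ 2
        + (1 - η) * (1 - η - 2 * η ^ 2 + 3 * η ^ 3) * v ^ 2
        + (1 + 2 * η + 5 * η ^ 2 - 4 * η ^ 3 + η ^ 4) * w ^ 2) := by
  subst hv hu hw
  unfold lyapunov
  ring

theorem lyapunov_step_le (h0 : 0 ≤ η) (h1 : η ≤ 1) {u v w u' v' w' : ℝ}
    (hu : u' = u - η * v) (hw : w' = w - η * (v + 2 * w)) (hv : v' = v - η * (-u' + v + w')) :
    lyapunov η u' v' w' ≤ (1 - η + η ^ 2) * (1 + η - η ^ 2) * lyapunov η u v w := by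
  have h1' : 0 ≤ 1 - η := sub_nonneg.2 h1
  have hη1η : 0 ≤ η * (1 - η) := mul_nonneg h0 h1'
  have coeff_vw : 0 ≤ 3 - 5 * η + 9 * η ^ 2 - 9 * η ^ 3 + 4 * η ^ 4 := by
    nlinarith [mul_nonneg hη1η hη1η, mul_nonneg hη1η h0]
  have coeff_v : 0 ≤ 1 - η - 2 * η ^ 2 + 3 * η ^ 3 := by
    nlinarith [mul_nonneg hη1η hη1η, mul_nonneg hη1η h0,
      mul_nonneg h0 (sq_nonneg (1 - 3 / 2 * η))]
  have coeff_w : 0 ≤ 1 + 2 * η + 5 * η ^ 2 - 4 * η ^ 3 + η ^ 4 := by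
    nlinarith [mul_nonneg (mul_nonneg h0 h0) h1']
  rw [← sub_nonneg, rate_mul_lyapunov_sub_lyapunov_step hu hw hv]
  refine mul_nonneg hη1η (add_nonneg (add_nonneg (add_nonneg (by positivity) ?_) ?_) ?_)
  · exact mul_nonneg coeff_vw (sq_nonneg _)
  · exact mul_nonneg (mul_nonneg h1' coeff_v) (sq_nonneg _)
  · exact mul_nonneg coeff_w (sq_nonneg _)

theorem sq_add_sq_add_sq_le_lyapunov (h : η ^ 2 ≤ 1) (u v w : ℝ) :
    (1 - η ^ 2) / 7 * (u ^ 2 + v ^ 2 + w ^ 2) ≤ lyapunov η u v w := by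
  have h' : 0 ≤ 1 - η ^ 2 := sub_nonneg.2 h
  have hη4 : η ^ 4 ≤ 1 := by nlinarith
  have hv : v ^ 2 ≤ 2 * (v + η ^ 2 * w) ^ 2 + 2 * w ^ 2 := by
    nlinarith [sq_nonneg (v + η ^ 2 * w + η ^ 2 * w),
      mul_le_mul_of_nonneg_right hη4 (sq_nonneg w)]
  have hu : u ^ 2 ≤ 2 * (u - η * v) ^ 2 + 2 * v ^ 2 := by
    nlinarith [sq_nonneg (u - η * v - η * v), mul_le_mul_of_nonneg_right h (sq_nonneg v)]
  unfold lyapunov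
  nlinarith [mul_nonneg h' (sq_nonneg (u - η * v)), mul_nonneg h' (sq_nonneg (v + η ^ 2 * w)),
    mul_nonneg (mul_nonneg h' (sq_nonneg η)) (sq_nonneg w)]

theorem rate_mem_Ico (h0 : 0 < η) (h1 : η < 1) :
    (1 - η + η ^ 2) * (1 + η - η ^ 2) ∈ Set.Ico 0 1 := by
  have hpos : 0 < η * (1 - η) := mul_pos h0 (sub_pos.2 h1)
  have hle : η * (1 - η) ≤ 1 := by nlinarith
  rw [show (1 - η + η ^ 2) * (1 + η - η ^ 2) = 1 - (η * (1 - η)) ^ 2 by ring]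
  constructor <;> nlinarith

end

theorem le_geom_of_lyapunov {N Q : ℕ → ℝ} {ρ c : ℝ} (hρ : 0 ≤ ρ) (hc : 0 < c)
    (hstep : ∀ t, Q (t + 1) ≤ ρ * Q t) (hNQ : ∀ t, c * N t ≤ Q t) (t : ℕ) :
    N t ≤ Q 0 / c * ρ ^ t := by
  rw [div_mul_eq_mul_div, le_div_iff₀ hc, mul_comm (N t), mul_comm (Q 0)]
  exact (hNQ t).trans (le_geom hρ t fun k _ => hstep k)

theorem tendsto_zero_of_sq_le {α : Type*} {l : Filter α} {f g : α → ℝ}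
    (hg : Tendsto g l (𝓝 0)) (hfg : ∀ t, f t ^ 2 ≤ g t) : Tendsto f l (𝓝 0) := by
  have hsqrt : Tendsto (fun t => √(g t)) l (𝓝 0) := by simpa using hg.sqrt
  exact squeeze_zero_norm (fun t => Real.abs_le_sqrt (hfg t)) hsqrt

/-- Proposition 1: Alternate SGD on the toy Stein Bridging objective
`l(θ, ψ, φ) = ψ − ψθ + (1/2)(1+φ)² + (1/2)(θ+φ)²` with step size `0 < η < 1`
makes `N_t = ψ_t² + (θ_t − 1)² + (φ_t + 1)²` decrease geometrically at rate
`(1 − η + η²)(1 + η − η²) = 1 − η²(1−η)²`, and the iterates converge to `(0, 1, −1)`. -/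
theorem stmt3 (η : ℝ) (hη0 : 0 < η) (hη1 : η < 1)
    (ψ φ θ : ℕ → ℝ)
    (hψ : ∀ t, ψ (t + 1) = ψ t + η * (1 - θ t))
    (hφ : ∀ t, φ (t + 1) = φ t - η * (1 + θ t + 2 * φ t))
    (hθ : ∀ t, θ (t + 1) = θ t - η * (-(ψ (t + 1)) + θ t + φ (t + 1))) :
    (∃ C ≥ (0 : ℝ), ∀ t,
      ψ t ^ 2 + (θ t - 1) ^ 2 + (φ t + 1) ^ 2 ≤
        C * ((1 - η + η ^ 2) * (1 + η - η ^ 2)) ^ t) ∧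
    Filter.Tendsto ψ Filter.atTop (nhds 0) ∧
    Filter.Tendsto θ Filter.atTop (nhds 1) ∧
    Filter.Tendsto φ Filter.atTop (nhds (-1)) := by
  obtain ⟨hρ0, hρ1⟩ := rate_mem_Ico hη0 hη1
  set N : ℕ → ℝ := fun t => ψ t ^ 2 + (θ t - 1) ^ 2 + (φ t + 1) ^ 2 with hN
  set Q : ℕ → ℝ := fun t => lyapunov η (ψ t) (θ t - 1) (φ t + 1)
  have hc : 0 < (1 - η ^ 2) / 7 := by nlinarith
  have hNQ : ∀ t, (1 - η ^ 2) / 7 * N t ≤ Q t := fun t =>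
    sq_add_sq_add_sq_le_lyapunov (by nlinarith) _ _ _
  have hbound := le_geom_of_lyapunov hρ0 hc (fun t => lyapunov_step_le hη0.le hη1.le
    (by rw [hψ]; ring) (by rw [hφ]; ring) (by rw [hθ]; ring)) hNQ
  have hC : 0 ≤ Q 0 / ((1 - η ^ 2) / 7) :=
    div_nonneg ((mul_nonneg hc.le (by positivity)).trans (hNQ 0)) hc.le
  have hNlim : Tendsto N atTop (𝓝 0) := squeeze_zero (fun t => by positivity) hbound
    (by simpa only [mul_zero] using (tendsto_pow_atTop_nhds_zero_of_lt_one hρ0 hρ1).const_mul _)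
  refine ⟨⟨_, hC, hbound⟩, tendsto_zero_of_sq_le hNlim fun t => ?_,
    tendsto_sub_nhds_zero_iff.1 (tendsto_zero_of_sq_le hNlim fun t => ?_),
    tendsto_sub_nhds_zero_iff.1 (tendsto_zero_of_sq_le hNlim fun t => ?_)⟩
  all_goals
    simp only [hN, sub_neg_eq_add]
    nlinarith [sq_nonneg (ψ t), sq_nonneg (θ t - 1), sq_nonneg (φ t + 1)]
end

section
/- (Divergence of simultaneous gradient updates on the WGAN bilinear game) Consider the objective min_θ max_ψ ψ − ψ·θ with optimum (θ*, ψ*) = (1, 0), and the simultaneous gradient updates with step size η > 0: θ_{k+1} = θ_k + ηψ_k and ψ_{k+1} = ψ_k + η(1 − θ_k). Then for every k, (θ_{k+1} − 1)² + ψ_{k+1}² = (1 + η²)·((θ_k − 1)² + ψ_k²). Consequently, unless (θ_0, ψ_0) = (1, 0), the squared distance to the optimum grows geometrically and the iterates diverge. -/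
open Filter

/-- Divergence of simultaneous gradient updates on the WGAN bilinear
game: For `θ_{k+1} = θ_k + ηψ_k`, `ψ_{k+1} = ψ_k + η(1 − θ_k)` with `η > 0`, the
squared distance to the optimum `(1, 0)` is multiplied by `1 + η²` at every step, and
hence tends to infinity unless `(θ₀, ψ₀) = (1, 0)`. -/
theorem stmt9 (η : ℝ) (hη : 0 < η) (θ ψ : ℕ → ℝ)
    (hθ : ∀ k, θ (k + 1) = θ k + η * ψ k)
    (hψ : ∀ k, ψ (k + 1) = ψ k + η * (1 - θ k)) :
    (∀ k, (θ (k + 1) - 1) ^ 2 + ψ (k + 1) ^ 2 =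
      (1 + η ^ 2) * ((θ k - 1) ^ 2 + ψ k ^ 2)) ∧
    ((θ 0, ψ 0) ≠ (1, 0) →
      Tendsto (fun k => (θ k - 1) ^ 2 + ψ k ^ 2) atTop atTop) := by
  have hstep : ∀ k, (θ (k + 1) - 1) ^ 2 + ψ (k + 1) ^ 2 =
      (1 + η ^ 2) * ((θ k - 1) ^ 2 + ψ k ^ 2) := by
    intro k
    rw [hθ k, hψ k]
    ring
  refine ⟨hstep, fun hne => ?_⟩
  have hd0 : 0 < (θ 0 - 1) ^ 2 + ψ 0 ^ 2 := by
    rcases (by simpa [Prod.ext_iff] using hne : ¬(θ 0 = 1 ∧ ψ 0 = 0)) with h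
    by_contra hc
    push_neg at hc
    have h1 : (θ 0 - 1) ^ 2 ≤ 0 := by nlinarith [sq_nonneg (ψ 0)]
    have h2 : (ψ 0) ^ 2 ≤ 0 := by nlinarith [sq_nonneg (θ 0 - 1)]
    exact h ⟨by nlinarith [sq_nonneg (θ 0 - 1)], by nlinarith [sq_nonneg (ψ 0)]⟩
  have hform : ∀ k, (θ k - 1) ^ 2 + ψ k ^ 2 =
      (1 + η ^ 2) ^ k * ((θ 0 - 1) ^ 2 + ψ 0 ^ 2) := by
    intro k
    induction k with
    | zero => simp
    | succ n ih => rw [hstep n, ih, pow_succ]; ring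
  have hgt : 1 < 1 + η ^ 2 := by nlinarith
  have : Tendsto (fun k => (1 + η ^ 2) ^ k * ((θ 0 - 1) ^ 2 + ψ 0 ^ 2)) atTop atTop :=
    (tendsto_pow_atTop_atTop_of_one_lt hgt).atTop_mul_const hd0
  exact this.congr fun k => (hform k).symm
end

section
/- (Oscillation of alternate SGD on the WGAN bilinear game) Consider the objective min_θ max_ψ ψ − ψ·θ with optimum (θ*, ψ*) = (1, 0), and the alternate gradient updates with step size η, 0 < η < 2: θ_{k+1} = θ_k + ηψ_k, then ψ_{k+1} = ψ_k + η(1 − θ_{k+1}). Then the iterates never converge to the optimum unless they start there: if (θ_0, ψ_0) ≠ (1, 0), then (θ_k, ψ_k) does not converge to (1, 0); indeed there exists c > 0, depending only on η, such that (θ_k − 1)² + ψ_k² ≥ c·((θ_0 − 1)² + ψ_0²) for all k. -/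
open Filter

/-- Oscillation of alternate SGD on the WGAN bilinear game: For
`θ_{k+1} = θ_k + ηψ_k`, then `ψ_{k+1} = ψ_k + η(1 − θ_{k+1})`, with `0 < η < 2`, there
is a constant `c > 0` depending only on `η` such that for any initialization the squared
distance to the optimum `(1, 0)` stays `≥ c` times its initial value; in particular the
iterates never converge to `(1, 0)` unless they start there. -/
theorem stmt10 (η : ℝ) (hη0 : 0 < η) (hη2 : η < 2) :
    ∃ c > (0 : ℝ), ∀ θ ψ : ℕ → ℝ,
      (∀ k, θ (k + 1) = θ k + η * ψ k) →
      (∀ k, ψ (k + 1) = ψ k + η * (1 - θ (k + 1))) →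
      (((θ 0, ψ 0) ≠ (1, 0) →
        ¬(Tendsto θ atTop (nhds 1) ∧ Tendsto ψ atTop (nhds 0))) ∧
      ∀ k, c * ((θ 0 - 1) ^ 2 + ψ 0 ^ 2) ≤ (θ k - 1) ^ 2 + ψ k ^ 2) := by
  refine ⟨(2 - η) / (2 + η), div_pos (by linarith) (by linarith), ?_⟩
  intro θ ψ hθ hψ
  have hinv : ∀ k, (θ k - 1) ^ 2 + η * (θ k - 1) * ψ k + ψ k ^ 2
      = (θ 0 - 1) ^ 2 + η * (θ 0 - 1) * ψ 0 + ψ 0 ^ 2 := by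
    intro k
    induction k with
    | zero => rfl
    | succ n ih =>
      rw [← ih, hψ n, hθ n]
      ring
  have hb : ∀ k, (2 - η) / (2 + η) * ((θ 0 - 1) ^ 2 + ψ 0 ^ 2)
      ≤ (θ k - 1) ^ 2 + ψ k ^ 2 := by
    intro k
    have h2η : (0 : ℝ) < 2 + η := by linarith
    rw [div_mul_eq_mul_div, div_le_iff₀ h2η]
    have hq := hinv k
    nlinarith [mul_nonneg hη0.le (sq_nonneg (θ 0 - 1 + ψ 0)),
      mul_nonneg hη0.le (sq_nonneg (θ k - 1 - ψ k))]
  refine ⟨?_, hb⟩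
  rintro hne ⟨h1, h2⟩
  have hX : Tendsto (fun k => (θ k - 1) ^ 2 + ψ k ^ 2) atTop (nhds 0) := by
    have : Tendsto (fun k => (θ k - 1) ^ 2 + ψ k ^ 2) atTop
        (nhds (((1 : ℝ) - 1) ^ 2 + (0 : ℝ) ^ 2)) :=
      ((h1.sub_const 1).pow 2).add (h2.pow 2)
    simpa using this
  have hle : (2 - η) / (2 + η) * ((θ 0 - 1) ^ 2 + ψ 0 ^ 2) ≤ 0 :=
    ge_of_tendsto hX (Filter.Eventually.of_forall hb)
  have hX0 : 0 < (θ 0 - 1) ^ 2 + ψ 0 ^ 2 := by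
    have h : θ 0 ≠ 1 ∨ ψ 0 ≠ 0 := by
      by_contra hc
      push_neg at hc
      exact hne (by simp [hc.1, hc.2])
    rcases h with h | h
    · have h1 : θ 0 - 1 ≠ 0 := sub_ne_zero.mpr h
      have : (θ 0 - 1) ^ 2 > 0 := by positivity
      nlinarith [sq_nonneg (ψ 0)]
    · have : (ψ 0) ^ 2 > 0 := by positivity
      nlinarith [sq_nonneg (θ 0 - 1)]
  have hc : (0 : ℝ) < (2 - η) / (2 + η) := div_pos (by linarith) (by linarith)
  nlinarith
end

section
/- (Theorem 4: convergence of alternate SGD on the augmented bilinear system) Let A be an invertible r×r real matrix with largest singular value σ_max, let b, c ∈ ℝʳ, and let B = (AAᵀ)^{1/2}. Let ψ* = A⁻¹b and θ* = (Aᵀ)⁻¹c, so Aψ* = b and Aᵀθ* = c. Define L(ψ, φ, θ) = θᵀAψ − bᵀθ − cᵀψ + (1/2)(θ + φ)ᵀB(θ + φ) and run alternate SGD with step size η satisfying 0 < η·σ_max < 1: ψ_{t+1} = ψ_t + η(Aᵀθ_t − c), φ_{t+1} = φ_t − ηB(θ_t + φ_t), θ_{t+1} = θ_t − η(Aψ_{t+1}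 − b + B(θ_t + φ_{t+1})). Then the iterates converge to the optimum: ψ_t → ψ*, θ_t → θ*, and φ_t → −θ* as t → ∞. -/
/-!
In an orthonormal eigenbasis of `B` the errors `A (ψ - ψ*)`, `θ - θ*`, `φ + θ*` decouple into
independent three-dimensional linear recurrences, one for each eigenvalue `d` of `B`, with step
`m = η d ∈ (0, 1)` (as `d ≤ σ_max`). Each of them is the alternate scheme itself in one
dimension, and carries the nonnegative quadratic Lyapunov function `alternateEnergy`, which
drops by at least `m² (1 - m) (v² + w²)` per step. Hence the `θ`- and `φ`-errors are square
summable and tend to `0`, and then so does the `ψ`-error, which the `θ`-update expresses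
through them.
-/

open Matrix Filter Topology

lemma tendsto_zero_of_tendsto_sq {α : Type*} {l : Filter α} {f : α → ℝ}
    (h : Tendsto (fun x => f x ^ 2) l (𝓝 0)) : Tendsto f l (𝓝 0) := by
  rw [tendsto_zero_iff_abs_tendsto_zero]
  simpa [Real.sqrt_sq_eq_abs, Function.comp_def] using h.sqrt

lemma tendsto_zero_of_energy_dissipation {E f : ℕ → ℝ} {c : ℝ} (hc : 0 < c)
    (hE : ∀ t, 0 ≤ E t) (hf : ∀ t, 0 ≤ f t) (h : ∀ t, E (t + 1) + c * f t ≤ E t) :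
    Tendsto f atTop (𝓝 0) := by
  have hsum : ∀ n, c * ∑ t ∈ Finset.range n, f t ≤ E 0 - E n := by
    intro n
    induction n with
    | zero => simp
    | succ n ih => rw [Finset.sum_range_succ, mul_add]; linarith [h n]
  refine (summable_of_sum_range_le (c := E 0 / c) hf fun n => ?_).tendsto_atTop_zero
  rw [le_div_iff₀' hc]
  linarith [hsum n, hE n]

lemma OrthonormalBasis.tendsto_zero_of_forall_dotProduct {ι α : Type*} [Fintype ι]
    {l : Filter α} (e : OrthonormalBasis ι ℝ (EuclideanSpace ℝ ι)) {y : α → ι → ℝ}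
    (h : ∀ j, Tendsto (fun x => ⇑(e j) ⬝ᵥ y x) l (𝓝 0)) : Tendsto y l (𝓝 0) := by
  have hrepr : ∀ x, y x = ∑ j, (⇑(e j) ⬝ᵥ y x) • ⇑(e j) := fun x => by
    have := congrArg WithLp.ofLp (e.sum_repr' (WithLp.toLp 2 (y x)))
    simpa [EuclideanSpace.inner_eq_star_dotProduct, dotProduct_comm] using this.symm
  rw [show y = fun x => ∑ j, (⇑(e j) ⬝ᵥ y x) • ⇑(e j) from funext hrepr]
  simpa using tendsto_finsetSum Finset.univ fun j _ => (h j).smul_const ⇑(e j)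

lemma Matrix.IsHermitian.vecMul_eigenvectorBasis {n : Type*} [Fintype n] [DecidableEq n]
    {B : Matrix n n ℝ} (hB : B.IsHermitian) (j : n) :
    ⇑(hB.eigenvectorBasis j) ᵥ* B = hB.eigenvalues j • ⇑(hB.eigenvectorBasis j) := by
  rw [← mulVec_transpose, (isHermitian_iff_isSymm.mp hB).eq, hB.mulVec_eigenvectorBasis]

lemma eigenvalue_le_of_isGreatest_sqrt_sum_sq {n : Type*} [Fintype n] {A B : Matrix n n ℝ}
    (hBsq : B * B = A * Aᵀ) {σ : ℝ}
    (hσ : IsGreatest {t : ℝ | ∃ x : n → ℝ,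
      (∑ i, x i ^ 2) = 1 ∧ t = Real.sqrt (∑ i, ((A *ᵥ x) i) ^ 2)} σ)
    {e : n → ℝ} {d : ℝ} (hd : 0 < d) (he : e ⬝ᵥ e = 1) (hBe : B *ᵥ e = d • e) :
    d ≤ σ := by
  have hsum : ∀ y : n → ℝ, ∑ i, y i ^ 2 = y ⬝ᵥ y := fun y => by simp [dotProduct, sq]
  have hAAe : A *ᵥ (Aᵀ *ᵥ e) = d ^ 2 • e := by
    rw [mulVec_mulVec, ← hBsq, ← mulVec_mulVec, hBe, mulVec_smul, hBe, smul_smul, sq]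
  -- the unit vector `x = Aᵀ e / d` satisfies `A x = d e`
  set x := d⁻¹ • (Aᵀ *ᵥ e)
  have hAx : A *ᵥ x = d • e := by
    rw [mulVec_smul, hAAe, smul_smul, sq, ← mul_assoc, inv_mul_cancel₀ hd.ne', one_mul]
  have hx : x ⬝ᵥ x = 1 := by
    rw [dotProduct_smul, smul_dotProduct, dotProduct_mulVec, vecMul_transpose, hAAe,
      smul_dotProduct, he, smul_eq_mul, smul_eq_mul, smul_eq_mul]
    field_simp
  refine hσ.2 ⟨x, by rw [hsum, hx], ?_⟩
  rw [hsum, hAx, dotProduct_smul, smul_dotProduct, he, smul_eq_mul, smul_eq_mul, mul_one,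
    Real.sqrt_mul_self hd.le]

-- Along a unit eigenvector `e` of `B` with eigenvalue `d`: `m = η d`, `p = e ⬝ A (ψ - ψ*) / d`,
-- `v = e ⬝ (θ - θ*)`, `w = e ⬝ (φ + θ*)`.
def alternateEnergy (m p v w : ℝ) : ℝ :=
  2 * p ^ 2 + 2 * m * p * v + 2 * m * (1 - m) * p * w + 2 * v ^ 2 + 2 * (1 - m) * w ^ 2

lemma alternateEnergy_nonneg {m : ℝ} (hm0 : 0 ≤ m) (hm1 : m ≤ 1) (p v w : ℝ) :
    0 ≤ alternateEnergy m p v w := by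
  have hsos : alternateEnergy m p v w = (p + m * v) ^ 2 + (p + m * (1 - m) * w) ^ 2
      + (2 - m ^ 2) * v ^ 2 + (1 - m) * (2 - m ^ 2 + m ^ 3) * w ^ 2 := by
    simp only [alternateEnergy]; ring
  have hm2 : m ^ 2 ≤ 1 := pow_le_one₀ hm0 hm1
  rw [hsos]
  have : 0 ≤ 1 - m := by linarith
  have : 0 ≤ 2 - m ^ 2 := by linarith
  have : 0 ≤ 2 - m ^ 2 + m ^ 3 := by positivity
  positivity

lemma alternateEnergy_succ {m p v w p' v' w' : ℝ} (hp : p' = p + m * v)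
    (hw : w' = w - m * (v + w)) (hv : v' = v - m * (p' + v + w')) :
    alternateEnergy m p' v' w' = alternateEnergy m p v w -
      m * (1 - m) * ((4 - 5 * m + 2 * m ^ 2) * (v + w) ^ 2 + m * (v ^ 2 + w ^ 2)) := by
  subst hp hw hv
  simp only [alternateEnergy]
  ring

lemma alternateEnergy_succ_add_le {m p v w p' v' w' : ℝ} (hm0 : 0 ≤ m) (hm1 : m ≤ 1)
    (hp : p' = p + m * v) (hw : w' = w - m * (v + w)) (hv : v' = v - m * (p' + v + w')) :
    alternateEnergy m p' v' w' + m ^ 2 * (1 - m) * (v ^ 2 + w ^ 2) ≤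
      alternateEnergy m p v w := by
  have h45 : 0 ≤ 4 - 5 * m + 2 * m ^ 2 := by nlinarith [sq_nonneg (m - 1)]
  have : 0 ≤ m * (1 - m) * ((4 - 5 * m + 2 * m ^ 2) * (v + w) ^ 2) := by
    have : 0 ≤ 1 - m := by linarith
    positivity
  rw [alternateEnergy_succ hp hw hv]
  linarith

theorem tendsto_zero_of_alternate_step {m : ℝ} (hm0 : 0 < m) (hm1 : m < 1) {p v w : ℕ → ℝ}
    (hp : ∀ t, p (t + 1) = p t + m * v t)
    (hw : ∀ t, w (t + 1) = w t - m * (v t + w t))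
    (hv : ∀ t, v (t + 1) = v t - m * (p (t + 1) + v t + w (t + 1))) :
    Tendsto p atTop (𝓝 0) ∧ Tendsto v atTop (𝓝 0) ∧ Tendsto w atTop (𝓝 0) := by
  have hc : 0 < m ^ 2 * (1 - m) := mul_pos (by positivity) (by linarith)
  have hvw : Tendsto (fun t => v t ^ 2 + w t ^ 2) atTop (𝓝 0) :=
    tendsto_zero_of_energy_dissipation (E := fun t => alternateEnergy m (p t) (v t) (w t)) hc
      (fun t => alternateEnergy_nonneg hm0.le hm1.le _ _ _) (fun t => by positivity)
      fun t => alternateEnergy_succ_add_le hm0.le hm1.le (hp t) (hw t) (hv t)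
  have hv0 : Tendsto v atTop (𝓝 0) := tendsto_zero_of_tendsto_sq <|
    squeeze_zero (fun t => sq_nonneg _) (fun t => le_add_of_nonneg_right (sq_nonneg (w t))) hvw
  have hw0 : Tendsto w atTop (𝓝 0) := tendsto_zero_of_tendsto_sq <|
    squeeze_zero (fun t => sq_nonneg _) (fun t => le_add_of_nonneg_left (sq_nonneg (v t))) hvw
  refine ⟨?_, hv0, hw0⟩
  have hp_succ : ∀ t, p (t + 1) = (v t - v (t + 1)) / m - v t - w (t + 1) := by
    intro t
    rw [hv t]
    field_simp
    ring
  have hv1 := (tendsto_add_atTop_iff_nat 1).2 hv0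
  have hw1 := (tendsto_add_atTop_iff_nat 1).2 hw0
  rw [← tendsto_add_atTop_iff_nat 1]
  simpa [hp_succ] using ((hv0.sub hv1).div_const m).sub hv0 |>.sub hw1

theorem tendsto_dotProduct_of_alternate_step {n : Type*} [Fintype n] {A B : Matrix n n ℝ}
    {b c ψs θs : n → ℝ} {η : ℝ} {ψ φ θ : ℕ → n → ℝ}
    (hBsq : B * B = A * Aᵀ) (hψs : A *ᵥ ψs = b) (hθs : Aᵀ *ᵥ θs = c)
    (hψ : ∀ t, ψ (t + 1) = ψ t + η • (Aᵀ *ᵥ θ t - c))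
    (hφ : ∀ t, φ (t + 1) = φ t - η • (B *ᵥ (θ t + φ t)))
    (hθ : ∀ t, θ (t + 1) = θ t - η • (A *ᵥ ψ (t + 1) - b + B *ᵥ (θ t + φ (t + 1))))
    {e : n → ℝ} {d : ℝ} (he : e ᵥ* B = d • e) (hm0 : 0 < η * d) (hm1 : η * d < 1) :
    Tendsto (fun t => e ⬝ᵥ (A *ᵥ (ψ t - ψs))) atTop (𝓝 0) ∧
    Tendsto (fun t => e ⬝ᵥ (θ t - θs)) atTop (𝓝 0) ∧
    Tendsto (fun t => e ⬝ᵥ (φ t + θs)) atTop (𝓝 0) := by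
  have hd : d ≠ 0 := by rintro rfl; simp at hm0
  have hB : ∀ z, e ⬝ᵥ (B *ᵥ z) = d * (e ⬝ᵥ z) := fun z => by
    rw [dotProduct_mulVec, he, smul_dotProduct, smul_eq_mul]
  have hAA : ∀ z, e ⬝ᵥ (A *ᵥ (Aᵀ *ᵥ z)) = d ^ 2 * (e ⬝ᵥ z) := fun z => by
    rw [mulVec_mulVec, ← hBsq, ← mulVec_mulVec, hB, hB]; ring
  -- the scaled coordinate `p` makes the recurrence homogeneous in `m = η d`
  obtain ⟨hp, hv, hw⟩ := tendsto_zero_of_alternate_step (m := η * d) hm0 hm1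
    (p := fun t => e ⬝ᵥ (A *ᵥ (ψ t - ψs)) / d) (v := fun t => e ⬝ᵥ (θ t - θs))
    (w := fun t => e ⬝ᵥ (φ t + θs))
    (fun t => by
      simp only [hψ t, ← hθs, ← mulVec_sub, add_sub_right_comm, mulVec_add, mulVec_smul,
        dotProduct_add, dotProduct_smul, hAA, smul_eq_mul]
      field_simp)
    (fun t => by
      simp only [hφ t, sub_add_eq_add_sub, dotProduct_sub, dotProduct_smul, hB, smul_eq_mul,
        show θ t + φ t = (θ t - θs) + (φ t + θs) by abel, dotProduct_add]
      ring)
    (fun t => by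
      simp only [hθ t, ← hψs, ← mulVec_sub, dotProduct_sub, dotProduct_smul, dotProduct_add,
        hB, smul_eq_mul, show θ t + φ (t + 1) = (θ t - θs) + (φ (t + 1) + θs) by abel,
        sub_right_comm (θ t)]
      field_simp
      ring)
  refine ⟨?_, hv, hw⟩
  simpa [mul_div_cancel₀ _ hd] using hp.const_mul d

/-- Theorem 4: convergence of alternate SGD on the augmented bilinear
system: `A` invertible with largest singular value `σ_max` (the maximum of `‖Ax‖` over
Euclidean unit vectors `x`), `B = (AAᵀ)^{1/2}`, `Aψ* = b`, `Aᵀθ* = c`, and step size `η`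
with `0 < ησ_max < 1`. Then the alternate SGD iterates
`ψ_{t+1} = ψ_t + η(Aᵀθ_t − c)`, `φ_{t+1} = φ_t − ηB(θ_t + φ_t)`,
`θ_{t+1} = θ_t − η(Aψ_{t+1} − b + B(θ_t + φ_{t+1}))`
converge: `ψ_t → ψ*`, `θ_t → θ*`, `φ_t → −θ*`. -/
theorem stmt14 (r : ℕ) (A B : Matrix (Fin r) (Fin r) ℝ) (b c : Fin r → ℝ)
    (hA : IsUnit A.det)
    (σmax : ℝ)
    (hσ : IsGreatest {t : ℝ | ∃ x : Fin r → ℝ,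
      (∑ i, x i ^ 2) = 1 ∧ t = Real.sqrt (∑ i, ((A *ᵥ x) i) ^ 2)} σmax)
    (hB : B.PosSemidef) (hBsq : B * B = A * Aᵀ)
    (ψs θs : Fin r → ℝ) (hψs : A *ᵥ ψs = b) (hθs : Aᵀ *ᵥ θs = c)
    (η : ℝ) (hη0 : 0 < η * σmax) (hη1 : η * σmax < 1)
    (ψ φ θ : ℕ → Fin r → ℝ)
    (hψ : ∀ t, ψ (t + 1) = ψ t + η • (Aᵀ *ᵥ θ t - c))
    (hφ : ∀ t, φ (t + 1) = φ t - η • (B *ᵥ (θ t + φ t)))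
    (hθ : ∀ t, θ (t + 1) = θ t - η • (A *ᵥ ψ (t + 1) - b + B *ᵥ (θ t + φ (t + 1)))) :
    Tendsto ψ atTop (nhds ψs) ∧
    Tendsto θ atTop (nhds θs) ∧
    Tendsto φ atTop (nhds (-θs)) := by
  set e := hB.isHermitian.eigenvectorBasis
  set d := hB.isHermitian.eigenvalues
  have hBpd : B.PosDef := hB.posDef_iff_det_ne_zero.mpr fun h0 => hA.ne_zero <| by
    simpa [h0, det_mul] using congrArg det hBsq
  have hσ0 : 0 ≤ σmax := by
    obtain ⟨x, -, rfl⟩ := hσ.1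
    exact Real.sqrt_nonneg _
  have hη : 0 < η := pos_of_mul_pos_left hη0 hσ0
  have hd_le : ∀ j, d j ≤ σmax := fun j =>
    eigenvalue_le_of_isGreatest_sqrt_sum_sq hBsq hσ (hBpd.eigenvalues_pos j)
      (by simpa only [EuclideanSpace.inner_eq_star_dotProduct, star_trivial] using
        e.inner_eq_one j)
      (hB.isHermitian.mulVec_eigenvectorBasis j)
  have hproj := fun j => tendsto_dotProduct_of_alternate_step hBsq hψs hθs hψ hφ hθ
    (hB.isHermitian.vecMul_eigenvectorBasis j) (mul_pos hη (hBpd.eigenvalues_pos j))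
    ((mul_le_mul_of_nonneg_left (hd_le j) hη.le).trans_lt hη1)
  have hψ0 := e.tendsto_zero_of_forall_dotProduct fun j => (hproj j).1
  have hθ0 := e.tendsto_zero_of_forall_dotProduct fun j => (hproj j).2.1
  have hφ0 := e.tendsto_zero_of_forall_dotProduct fun j => (hproj j).2.2
  refine ⟨?_, tendsto_sub_nhds_zero_iff.mp hθ0,
    tendsto_sub_nhds_zero_iff.mp <| by simpa using hφ0⟩
  rw [← tendsto_sub_nhds_zero_iff]
  simpa [Function.comp_def, mulVec_mulVec, nonsing_inv_mul A hA] using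
    ((continuous_const (y := A⁻¹)).matrix_mulVec continuous_id |>.tendsto 0).comp hψ0
end

section
/- (Lemma: SVD decoupling of the augmented bilinear dynamics) Let A be an invertible r×r real matrix with singular value decomposition A = U D Vᵀ, where U, V are orthogonal and D is diagonal with positive diagonal entries σ₁, …, σ_r, and let B = (AAᵀ)^{1/2} = U D Uᵀ. Let b, c ∈ ℝʳ, ψ* = A⁻¹b, θ* = (Aᵀ)⁻¹c, φ* = −θ*, and consider the alternate SGD iterates with step size η: ψ_{t+1} = ψ_t + η(Aᵀθ_t − c), φ_{t+1} = φ_t − ηB(θ_t + φ_t), θ_{t+1} = θ_t − η(Aψ_{t+1} − b + B(θ_t + φ_{t+1})). Define the transformed coordinates ψ̃_t = Vᵀ(ψ_t − ψ*), θ̃_t = Uᵀ(θ_t − θ*), φ̃_t = Uᵀ(φ_t − φ*). Then the dynamics decouple into r independent one-dimensional recursions: for each coordinate i, ψ̃_{t+1,i} = ψ̃_{t,i} + ησᵢ θ̃_{t,i}, φ̃_{t+1,i} = φ̃_{t,i} − ησᵢ(θ̃_{t,i} + φ̃_{t,i}), θ̃_{t+1,i} = θ̃_{t,i} − ησᵢ(ψ̃_{t+1,i}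 + θ̃_{t,i} + φ̃_{t+1,i}); i.e., each triple follows the alternate SGD update with step size σᵢη for the unidimensional problem min_θ max_ψ min_φ θψ + θφ + (1/2)θ² + (1/2)φ². -/
open Matrix

/-- Lemma: SVD decoupling of the augmented bilinear dynamics: With
`A = U D Vᵀ` an SVD (`U, V` orthogonal, `D = diag(σ)` with `σᵢ > 0`),
`B = (AAᵀ)^{1/2} = U D Uᵀ`, `Aψ* = b`, `Aᵀθ* = c`, `φ* = −θ*`, the alternate SGD
iterates, written in the transformed coordinates `ψ̃_t = Vᵀ(ψ_t − ψ*)`,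
`θ̃_t = Uᵀ(θ_t − θ*)`, `φ̃_t = Uᵀ(φ_t − φ*)`, decouple into `r` independent
one-dimensional alternate SGD recursions with step sizes `ησᵢ` for the problem
`min_θ max_ψ min_φ θψ + θφ + θ²/2 + φ²/2`. -/
theorem stmt15 (r : ℕ) (A U V D B : Matrix (Fin r) (Fin r) ℝ) (σ : Fin r → ℝ)
    (hσpos : ∀ i, 0 < σ i) (hD : D = Matrix.diagonal σ)
    (hU : Uᵀ * U = 1) (hU' : U * Uᵀ = 1)
    (hV : Vᵀ * V = 1) (hV' : V * Vᵀ = 1)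
    (hA : A = U * D * Vᵀ) (hB : B = U * D * Uᵀ)
    (b c ψs θs φs : Fin r → ℝ)
    (hψs : A *ᵥ ψs = b) (hθs : Aᵀ *ᵥ θs = c) (hφs : φs = -θs)
    (η : ℝ)
    (ψ φ θ : ℕ → Fin r → ℝ)
    (hψ : ∀ t, ψ (t + 1) = ψ t + η • (Aᵀ *ᵥ θ t - c))
    (hφ : ∀ t, φ (t + 1) = φ t - η • (B *ᵥ (θ t + φ t)))
    (hθ : ∀ t, θ (t + 1) = θ t - η • (A *ᵥ ψ (t + 1) - b + B *ᵥ (θ t + φ (t + 1))))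
    (ψt θt φt : ℕ → Fin r → ℝ)
    (hψt : ∀ t, ψt t = Vᵀ *ᵥ (ψ t - ψs))
    (hθt : ∀ t, θt t = Uᵀ *ᵥ (θ t - θs))
    (hφt : ∀ t, φt t = Uᵀ *ᵥ (φ t - φs)) :
    ∀ t i,
      ψt (t + 1) i = ψt t i + η * σ i * θt t i ∧
      φt (t + 1) i = φt t i - η * σ i * (θt t i + φt t i) ∧
      θt (t + 1) i = θt t i - η * σ i * (ψt (t + 1) i + θt t i + φt (t + 1) i) := by
  have hAT : Aᵀ = V * D * Uᵀ := by
    rw [hA, hD]; simp [Matrix.transpose_mul, Matrix.mul_assoc]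
  have hVA : Vᵀ * Aᵀ = D * Uᵀ := by
    rw [hAT, ← Matrix.mul_assoc, ← Matrix.mul_assoc, hV, Matrix.one_mul]
  have hUA : Uᵀ * A = D * Vᵀ := by
    rw [hA, ← Matrix.mul_assoc, ← Matrix.mul_assoc, hU, Matrix.one_mul]
  have hUB : Uᵀ * B = D * Uᵀ := by
    rw [hB, ← Matrix.mul_assoc, ← Matrix.mul_assoc, hU, Matrix.one_mul]
  have e1 : ∀ t, ψt (t + 1) = ψt t + η • (D *ᵥ θt t) := by
    intro t
    rw [hψt, hθt, hψt, hψ, ← hθs]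
    have : ψ t + η • (Aᵀ *ᵥ θ t - Aᵀ *ᵥ θs) - ψs
        = (ψ t - ψs) + η • (Aᵀ *ᵥ (θ t - θs)) := by
      rw [Matrix.mulVec_sub]; module
    rw [this, Matrix.mulVec_add, Matrix.mulVec_smul, Matrix.mulVec_mulVec, hVA,
      ← Matrix.mulVec_mulVec]
  have e2 : ∀ t, φt (t + 1) = φt t - η • (D *ᵥ (θt t + φt t)) := by
    intro t
    rw [hφt, hθt, hφt, hφ]
    have harg : (θ t - θs) + (φ t - φs) = θ t + φ t := by rw [hφs]; module
    have : φ t - η • (B *ᵥ (θ t + φ t)) - φs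
        = (φ t - φs) - η • (B *ᵥ ((θ t - θs) + (φ t - φs))) := by
      rw [harg, hφs]; module
    rw [this, Matrix.mulVec_sub, Matrix.mulVec_smul, Matrix.mulVec_mulVec, hUB,
      ← Matrix.mulVec_mulVec, Matrix.mulVec_add, Matrix.mulVec_add]
  have e3 : ∀ t, θt (t + 1) = θt t - η • (D *ᵥ (ψt (t + 1) + θt t + φt (t + 1))) := by
    intro t
    rw [hθt, hθt, hψt, hφt, hθ, ← hψs]
    have : θ t - η • (A *ᵥ ψ (t + 1) - A *ᵥ ψs + B *ᵥ (θ t + φ (t + 1))) - θs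
        = (θ t - θs) - η • (A *ᵥ (ψ (t + 1) - ψs) + B *ᵥ ((θ t - θs) + (φ (t + 1) - φs))) := by
      rw [hφs, Matrix.mulVec_sub A, Matrix.mulVec_add B, Matrix.mulVec_add B,
        Matrix.mulVec_sub B, Matrix.mulVec_sub B, Matrix.mulVec_neg]
      module
    rw [this, Matrix.mulVec_sub, Matrix.mulVec_smul, Matrix.mulVec_add,
      Matrix.mulVec_mulVec, Matrix.mulVec_mulVec, hUA, hUB,
      ← Matrix.mulVec_mulVec, ← Matrix.mulVec_mulVec, Matrix.mulVec_add D,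
      Matrix.mulVec_add D, Matrix.mulVec_add, add_assoc]
    rw [Matrix.mulVec_add D]
  intro t i
  have d1 := congrFun (e1 t) i
  have d2 := congrFun (e2 t) i
  have d3 := congrFun (e3 t) i
  simp only [hD, Pi.add_apply, Pi.sub_apply, Pi.smul_apply, Matrix.mulVec_diagonal,
    smul_eq_mul] at d1 d2 d3
  refine ⟨by rw [d1]; ring, by rw [d2]; ring, by rw [d3]; ring⟩
end

section
/- (Unidimensional convergence used in Theorem 4) Let 0 < η < 1 and consider the alternate SGD iteration for the problem min_θ max_ψ min_φ θψ + θφ + (1/2)θ² + (1/2)φ²: ψ_{t+1} = ψ_t + ηθ_t, φ_{t+1} = φ_t − η(θ_t + φ_t), θ_{t+1} = θ_t − η(ψ_{t+1} + θ_t + φ_{t+1}). Then the iterates converge geometrically to the unique stationary point (0, 0, 0): there exists C ≥ 0 (depending on η and the initialization) such that ψ_t² + φ_t² + θ_t² ≤ C·((1 − η + η²)(1 + η − η²))^t for all t; in particular (ψ_t, φ_t, θ_t) → (0, 0, 0). -/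
open Filter

set_option maxHeartbeats 4000000 in
set_option maxRecDepth 100000 in
/-- Unidimensional convergence used in Theorem 4: Alternate SGD on
`min_θ max_ψ min_φ θψ + θφ + θ²/2 + φ²/2` with step size `0 < η < 1`, i.e.
`ψ_{t+1} = ψ_t + ηθ_t`, `φ_{t+1} = φ_t − η(θ_t + φ_t)`,
`θ_{t+1} = θ_t − η(ψ_{t+1} + θ_t + φ_{t+1})`, converges geometrically at rate
`(1 − η + η²)(1 + η − η²) = 1 − η²(1 − η)²` to the unique stationary point `(0, 0, 0)`. -/
theorem stmt16 (η : ℝ) (hη0 : 0 < η) (hη1 : η < 1) (ψ φ θ : ℕ → ℝ)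
    (hψ : ∀ t, ψ (t + 1) = ψ t + η * θ t)
    (hφ : ∀ t, φ (t + 1) = φ t - η * (θ t + φ t))
    (hθ : ∀ t, θ (t + 1) = θ t - η * (ψ (t + 1) + θ t + φ (t + 1))) :
    (∃ C ≥ (0 : ℝ), ∀ t,
      ψ t ^ 2 + φ t ^ 2 + θ t ^ 2 ≤ C * ((1 - η + η ^ 2) * (1 + η - η ^ 2)) ^ t) ∧
    Tendsto ψ atTop (nhds 0) ∧
    Tendsto φ atTop (nhds 0) ∧
    Tendsto θ atTop (nhds 0) := by
  have h1 : (0:ℝ) < 1 - η := by linarith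
  set R : ℝ := (1 - η + η ^ 2) * (1 + η - η ^ 2) with hRdef
  have hR0 : 0 < R := by nlinarith [sq_nonneg (η*(1-η)), mul_pos hη0 h1]
  have hR1 : R < 1 := by nlinarith [mul_pos hη0 h1]
  obtain ⟨a11, ha11⟩ : ∃ x:ℝ, x = ((40)*η + (-154)*η^2 + (292)*η^3 + (-352)*η^4 + (358)*η^5 + (-536)*η^6 + (1031)*η^7 + (-1659)*η^8 + (2034)*η^9 + (-1941)*η^10 + (1498)*η^11 + (-962)*η^12 + (513)*η^13 + (-216)*η^14 + (65)*η^15 + (-12)*η^16 + (1)*η^17) := ⟨_, rfl⟩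
  obtain ⟨a12, ha12⟩ : ∃ x:ℝ, x = ((12)*η + (-52)*η^2 + (96)*η^3 + (-79)*η^4 + (-22)*η^5 + (128)*η^6 + (-147)*η^7 + (101)*η^8 + (-97)*η^9 + (175)*η^10 + (-250)*η^11 + (232)*η^12 + (-139)*η^13 + (52)*η^14 + (-11)*η^15 + (1)*η^16) := ⟨_, rfl⟩
  obtain ⟨a13, ha13⟩ : ∃ x:ℝ, x = ((4)*η + (-2)*η^2 + (-21)*η^3 + (48)*η^4 + (-18)*η^5 + (-103)*η^6 + (239)*η^7 + (-270)*η^8 + (166)*η^9 + (-19)*η^10 + (-66)*η^11 + (68)*η^12 + (-34)*η^13 + (9)*η^14 + (-1)*η^15) := ⟨_, rfl⟩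
  obtain ⟨a22, ha22⟩ : ∃ x:ℝ, x = ((20)*η + (-112)*η^2 + (303)*η^3 + (-521)*η^4 + (654)*η^5 + (-731)*η^6 + (940)*η^7 + (-1358)*η^8 + (1735)*η^9 + (-1712)*η^10 + (1241)*η^11 + (-636)*η^12 + (217)*η^13 + (-44)*η^14 + (4)*η^15) := ⟨_, rfl⟩
  obtain ⟨a23, ha23⟩ : ∃ x:ℝ, x = ((-16)*η + (78)*η^2 + (-191)*η^3 + (318)*η^4 + (-421)*η^5 + (524)*η^6 + (-677)*η^7 + (853)*η^8 + (-942)*η^9 + (859)*η^10 + (-634)*η^11 + (374)*η^12 + (-170)*η^13 + (55)*η^14 + (-11)*η^15 + (1)*η^16) := ⟨_, rfl⟩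
  obtain ⟨a33, ha33⟩ : ∃ x:ℝ, x = ((24)*η + (-92)*η^2 + (195)*η^3 + (-309)*η^4 + (447)*η^5 + (-652)*η^6 + (895)*η^7 + (-1084)*η^8 + (1153)*η^9 + (-1107)*η^10 + (964)*η^11 + (-728)*η^12 + (445)*η^13 + (-204)*η^14 + (64)*η^15 + (-12)*η^16 + (1)*η^17) := ⟨_, rfl⟩
  obtain ⟨D, hD⟩ : ∃ x:ℝ, x = ((8) + (-52)*η + (172)*η^2 + (-343)*η^3 + (505)*η^4 + (-654)*η^5 + (921)*η^6 + (-1400)*η^7 + (1952)*η^8 + (-2270)*η^9 + (2151)*η^10 + (-1670)*η^11 + (1068)*η^12 + (-556)*η^13 + (226)*η^14 + (-66)*η^15 + (12)*η^16 + (-1)*η^17) := ⟨_, rfl⟩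
  obtain ⟨m2, hm2⟩ : ∃ x:ℝ, x = ((656)*η^2 + (-6312)*η^3 + (30200)*η^4 + (-95366)*η^5 + (224550)*η^6 + (-429752)*η^7 + (728483)*η^8 + (-1186082)*η^9 + (1923389)*η^10 + (-3033058)*η^11 + (4464457)*η^12 + (-6029100)*η^13 + (7567283)*η^14 + (-9087646)*η^15 + (10664942)*η^16 + (-12165150)*η^17 + (13126889)*η^18 + (-13001694)*η^19 + (11565167)*η^20 + (-9120406)*η^21 + (6328185)*η^22 + (-3839942)*η^23 + (2023014)*η^24 + (-915672)*η^25 + (350662)*η^26 + (-111176)*η^27 + (28308)*η^28 + (-5542)*η^29 + (780)*η^30 + (-70)*η^31 + (3)*η^32) := ⟨_, rfl⟩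
  obtain ⟨m3, hm3⟩ : ∃ x:ℝ, x = ((3648)*η^3 + (-55552)*η^4 + (421008)*η^5 + (-2100416)*η^6 + (7759016)*η^7 + (-22785928)*η^8 + (56178705)*η^9 + (-122058389)*η^10 + (243867627)*η^11 + (-461683910)*η^12 + (838139937)*η^13 + (-1456437006)*η^14 + (2411333311)*η^15 + (-3804289359)*η^16 + (5749927111)*η^17 + (-8379547733)*η^18 + (11814510567)*η^19 + (-16104272647)*η^20 + (21165051963)*η^21 + (-26765607435)*η^22 + (32565476370)*η^23 + (-38161407815)*η^24 + (43099211286)*η^25 + (-46862608247)*η^26 + (48897969077)*η^27 + (-48720955192)*η^28 + (46086277278)*η^29 + (-41139400068)*η^30 + (34457474057)*η^31 + (-26935367170)*η^32 + (19552112807)*η^33 + (-13115512706)*η^34 + (8090231273)*η^35 + (-4565014323)*η^36 + (2342517187)*η^37 + (-1085772818)*η^38 + (450957277)*η^39 + (-166234498)*η^40 + (53764398)*η^41 + (-15043920)*η^42 + (3578927)*η^43 + (-707944)*η^44 + (113030)*η^45 + (-13964)*η^46 + (1250)*η^47 + (-72)*η^48 + (2)*η^49) := ⟨_, rfl⟩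
  obtain ⟨q, hq⟩ : ∃ x:ℝ, x = ((-688)*η^2 + (5816)*η^3 + (-24560)*η^4 + (69382)*η^5 + (-150110)*η^6 + (275859)*η^7 + (-471648)*η^8 + (789940)*η^9 + (-1287357)*η^10 + (1976473)*η^11 + (-2808870)*η^12 + (3719454)*η^13 + (-4678402)*η^14 + (5672761)*η^15 + (-6625901)*η^16 + (7353354)*η^17 + (-7625405)*η^18 + (7294318)*η^19 + (-6383586)*η^20 + (5081232)*η^21 + (-3657634)*η^22 + (2364266)*η^23 + (-1360203)*η^24 + (688935)*η^25 + (-303090)*η^26 + (113857)*η^27 + (-35706)*η^28 + (9063)*η^29 + (-1781)*η^30 + (253)*η^31 + (-23)*η^32 + (1)*η^33) := ⟨_, rfl⟩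
  obtain ⟨s, hs⟩ : ∃ x:ℝ, x = ((944)*η^2 + (-7360)*η^3 + (29140)*η^4 + (-78170)*η^5 + (163277)*η^6 + (-296818)*η^7 + (513982)*η^8 + (-878210)*η^9 + (1449233)*η^10 + (-2239390)*η^11 + (3213145)*η^12 + (-4334186)*η^13 + (5593999)*η^14 + (-6970408)*η^15 + (8353578)*η^16 + (-9522470)*η^17 + (10204947)*η^18 + (-10183980)*η^19 + (9392050)*η^20 + (-7952296)*η^21 + (6145327)*η^22 + (-4310312)*η^23 + (2728079)*η^24 + (-1546762)*η^25 + (777564)*η^26 + (-341504)*η^27 + (128414)*η^28 + (-40252)*η^29 + (10157)*η^30 + (-1968)*η^31 + (273)*η^32 + (-24)*η^33 + (1)*η^34) := ⟨_, rfl⟩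
  have hD0 : (0:ℝ) < D := by
    rw [hD]
    have hrep : ((8) + (-52)*η + (172)*η^2 + (-343)*η^3 + (505)*η^4 + (-654)*η^5 + (921)*η^6 + (-1400)*η^7 + (1952)*η^8 + (-2270)*η^9 + (2151)*η^10 + (-1670)*η^11 + (1068)*η^12 + (-556)*η^13 + (226)*η^14 + (-66)*η^15 + (12)*η^16 + (-1)*η^17) = ((8)*(1-η)^17 + (84)*η*(1-η)^16 + (428)*η^2*(1-η)^15 + (1437)*η^3*(1-η)^14 + (3683)*η^4*(1-η)^13 + (7822)*η^5*(1-η)^12 + (14263)*η^6*(1-η)^11 + (22338)*η^7*(1-η)^10 + (29576)*η^8*(1-η)^9 + (32499)*η^9*(1-η)^8 + (29153)*η^10*(1-η)^7 + (21004)*η^11*(1-η)^6 + (11918)*η^12*(1-η)^5 + (5183)*η^13*(1-η)^4 + (1658)*η^14*(1-η)^3 + (365)*η^15*(1-η)^2 + (49)*η^16*(1-η) + (3)*η^17) := by ring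
    rw [hrep]; positivity
  have hm10 : (0:ℝ) < a11 := by
    rw [ha11]
    have hrep : ((40)*η + (-154)*η^2 + (292)*η^3 + (-352)*η^4 + (358)*η^5 + (-536)*η^6 + (1031)*η^7 + (-1659)*η^8 + (2034)*η^9 + (-1941)*η^10 + (1498)*η^11 + (-962)*η^12 + (513)*η^13 + (-216)*η^14 + (65)*η^15 + (-12)*η^16 + (1)*η^17) = ((40)*η*(1-η)^16 + (486)*η^2*(1-η)^15 + (2782)*η^3*(1-η)^14 + (9966)*η^4*(1-η)^13 + (25084)*η^5*(1-η)^12 + (47102)*η^6*(1-η)^11 + (68241)*η^7*(1-η)^10 + (77665)*η^8*(1-η)^9 + (69930)*η^9*(1-η)^8 + (49705)*η^10*(1-η)^7 + (27571)*η^11*(1-η)^6 + (11669)*η^12*(1-η)^5 + (3626)*η^13*(1-η)^4 + (775)*η^14*(1-η)^3 + (101)*η^15*(1-η)^2 + (6)*η^16*(1-η)) := by ring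
    rw [hrep]; positivity
  have hm20 : (0:ℝ) < m2 := by
    rw [hm2]
    have hrep : ((656)*η^2 + (-6312)*η^3 + (30200)*η^4 + (-95366)*η^5 + (224550)*η^6 + (-429752)*η^7 + (728483)*η^8 + (-1186082)*η^9 + (1923389)*η^10 + (-3033058)*η^11 + (4464457)*η^12 + (-6029100)*η^13 + (7567283)*η^14 + (-9087646)*η^15 + (10664942)*η^16 + (-12165150)*η^17 + (13126889)*η^18 + (-13001694)*η^19 + (11565167)*η^20 + (-9120406)*η^21 + (6328185)*η^22 + (-3839942)*η^23 + (2023014)*η^24 + (-915672)*η^25 + (350662)*η^26 + (-111176)*η^27 + (28308)*η^28 + (-5542)*η^29 + (780)*η^30 + (-70)*η^31 + (3)*η^32) = ((656)*η^2*(1-η)^30 + (13368)*η^3*(1-η)^29 + (132512)*η^4*(1-η)^28 + (850922)*η^5*(1-η)^27 + (3978900)*η^6*(1-η)^26 + (14437906)*η^7*(1-η)^25 + (42297723)*η^8*(1-η)^24 + (102743170)*η^9*(1-η)^23 + (210823971)*η^10*(1-η)^22 + (370378046)*η^11*(1-η)^21 + (562525274)*η^12*(1-η)^20 + (743726272)*η^13*(1-η)^19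 + (860004278)*η^14*(1-η)^18 + (872246372)*η^15*(1-η)^17 + (776859158)*η^16*(1-η)^16 + (607347430)*η^17*(1-η)^15 + (415963337)*η^18*(1-η)^14 + (248643046)*η^19*(1-η)^13 + (128980714)*η^20*(1-η)^12 + (57596410)*η^21*(1-η)^11 + (21897172)*η^22*(1-η)^10 + (6982218)*η^23*(1-η)^9 + (1829474)*η^24*(1-η)^8 + (382804)*η^25*(1-η)^7 + (61352)*η^26*(1-η)^6 + (7052)*η^27*(1-η)^5 + (516)*η^28*(1-η)^4 + (18)*η^29*(1-η)^3) := by ring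
    rw [hrep]; positivity
  have hm30 : (0:ℝ) < m3 := by
    rw [hm3]
    have hrep : ((3648)*η^3 + (-55552)*η^4 + (421008)*η^5 + (-2100416)*η^6 + (7759016)*η^7 + (-22785928)*η^8 + (56178705)*η^9 + (-122058389)*η^10 + (243867627)*η^11 + (-461683910)*η^12 + (838139937)*η^13 + (-1456437006)*η^14 + (2411333311)*η^15 + (-3804289359)*η^16 + (5749927111)*η^17 + (-8379547733)*η^18 + (11814510567)*η^19 + (-16104272647)*η^20 + (21165051963)*η^21 + (-26765607435)*η^22 + (32565476370)*η^23 + (-38161407815)*η^24 + (43099211286)*η^25 + (-46862608247)*η^26 + (48897969077)*η^27 + (-48720955192)*η^28 + (46086277278)*η^29 + (-41139400068)*η^30 + (34457474057)*η^31 + (-26935367170)*η^32 + (19552112807)*η^33 + (-13115512706)*η^34 + (8090231273)*η^35 + (-4565014323)*η^36 + (2342517187)*η^37 + (-1085772818)*η^38 + (450957277)*η^39 + (-166234498)*η^40 + (53764398)*η^41 + (-15043920)*η^42 + (3578927)*η^43 + (-707944)*η^44 + (113030)*η^45 + (-13964)*η^46 + (1250)*η^47 + (-72)*η^48 + (2)*η^49)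 = ((3648)*η^3*(1-η)^46 + (112256)*η^4*(1-η)^45 + (1696848)*η^5*(1-η)^44 + (16804096)*η^6*(1-η)^43 + (122730696)*η^7*(1-η)^42 + (705787400)*η^8*(1-η)^41 + (3332491329)*η^9*(1-η)^40 + (13303509555)*η^10*(1-η)^39 + (45887031284)*η^11*(1-η)^38 + (139047570075)*η^12*(1-η)^37 + (374984702039)*η^13*(1-η)^36 + (909128019015)*η^14*(1-η)^35 + (1996944440207)*η^15*(1-η)^34 + (3997173487570)*η^16*(1-η)^33 + (7321350137967)*η^17*(1-η)^32 + (12305626249751)*η^18*(1-η)^31 + (19013103992164)*η^19*(1-η)^30 + (27030151713098)*η^20*(1-η)^29 + (35370036861182)*η^21*(1-η)^28 + (42595394587490)*η^22*(1-η)^27 + (47187486998265)*η^23*(1-η)^26 + (48050687875588)*η^24*(1-η)^25 + (44930113818286)*η^25*(1-η)^24 + (38528409479272)*η^26*(1-η)^23 + (30251348908482)*η^27*(1-η)^22 + (21707019852523)*η^28*(1-η)^21 + (14202145792288)*η^29*(1-η)^20 + (8449271231309)*η^30*(1-η)^19 + (4555975051894)*η^31*(1-η)^18 + (2217964283597)*η^32*(1-η)^17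 + (970348791216)*η^33*(1-η)^16 + (379397553097)*η^34*(1-η)^15 + (131691677815)*η^35*(1-η)^14 + (40253661565)*η^36*(1-η)^13 + (10728091467)*η^37*(1-η)^12 + (2462237466)*η^38*(1-η)^11 + (479039483)*η^39*(1-η)^10 + (77383275)*η^40*(1-η)^9 + (10089197)*η^41*(1-η)^8 + (1019037)*η^42*(1-η)^7 + (74736)*η^43*(1-η)^6 + (3537)*η^44*(1-η)^5 + (81)*η^45*(1-η)^4) := by ring
    rw [hrep]; positivity
  set V : ℕ → ℝ := fun t => a11*ψ t^2 + 2*a12*ψ t*φ t + 2*a13*ψ t*θ t + a22*φ t^2 + 2*a23*φ t*θ t + a33*θ t^2 with hV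
  have hid1 : ∀ t, a11 * V t = (a11*ψ t + a12*φ t + a13*θ t)^2
      + (m2*φ t^2 + 2*q*φ t*θ t + s*θ t^2) := by
    intro t
    simp only [hV, ha11, ha12, ha13, ha22, ha23, ha33, hD, hm2, hm3, hq, hs]
    ring
  have hid2 : ∀ t, m2 * (m2*φ t^2 + 2*q*φ t*θ t + s*θ t^2) =
      (m2*φ t + q*θ t)^2 + (a11*m3)*θ t^2 := by
    intro t
    simp only [ha11, ha12, ha13, ha22, ha23, ha33, hD, hm2, hm3, hq, hs]
    ring
  have hVpos : ∀ t, 0 ≤ V t := by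
    intro t
    have hW : 0 ≤ m2*φ t^2 + 2*q*φ t*θ t + s*θ t^2 := by
      nlinarith [hid2 t, sq_nonneg (m2*φ t + q*θ t),
        mul_nonneg (mul_nonneg hm10.le hm30.le) (sq_nonneg (θ t)), hm20]
    nlinarith [hid1 t, sq_nonneg (a11*ψ t + a12*φ t + a13*θ t), hm10]
  have key : ∀ t, R * V t - V (t+1) = D * (η^2*(1-η)^2) * (ψ t^2 + φ t^2 + θ t^2) := by
    intro t
    simp only [hV, hRdef, ha11, ha12, ha13, ha22, ha23, ha33, hD, hm2, hm3, hq, hs, hψ, hφ, hθ]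
    ring
  have hg : (0:ℝ) < η^2*(1-η)^2 := by positivity
  have hDg : (0:ℝ) < D * (η^2*(1-η)^2) := mul_pos hD0 hg
  have step : ∀ t, V (t+1) ≤ R * V t := by
    intro t
    have h := key t
    have hnn : 0 ≤ D * (η^2*(1-η)^2) * (ψ t^2 + φ t^2 + θ t^2) :=
      mul_nonneg hDg.le (by positivity)
    linarith
  have decay : ∀ t, V t ≤ V 0 * R ^ t := by
    intro t
    induction t with
    | zero => simp
    | succ n ih =>
      calc V (n+1) ≤ R * V n := step n
        _ ≤ R * (V 0 * R ^ n) := mul_le_mul_of_nonneg_left ih hR0.le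
        _ = V 0 * R ^ (n+1) := by ring
  have hbound : ∀ t, ψ t ^ 2 + φ t ^ 2 + θ t ^ 2 ≤ (V 0 * R / (D * (η^2*(1-η)^2))) * R ^ t := by
    intro t
    rw [div_mul_eq_mul_div, le_div_iff₀ hDg]
    have h := key t
    have h2 := hVpos (t+1)
    have h3 := mul_le_mul_of_nonneg_left (decay t) hR0.le
    nlinarith
  have hC0 : 0 ≤ V 0 * R / (D * (η^2*(1-η)^2)) :=
    div_nonneg (mul_nonneg (hVpos 0) hR0.le) hDg.le
  have hlimC : Tendsto (fun t => (V 0 * R / (D * (η^2*(1-η)^2))) * R ^ t) atTop (nhds 0) := by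
    simpa using (tendsto_pow_atTop_nhds_zero_of_lt_one hR0.le hR1).const_mul (V 0 * R / (D * (η^2*(1-η)^2)))
  have hS : Tendsto (fun t => ψ t ^ 2 + φ t ^ 2 + θ t ^ 2) atTop (nhds 0) :=
    tendsto_of_tendsto_of_tendsto_of_le_of_le tendsto_const_nhds hlimC
      (fun t => by positivity) hbound
  have sq0 : ∀ f : ℕ → ℝ, (∀ t, f t ^ 2 ≤ ψ t ^ 2 + φ t ^ 2 + θ t ^ 2) →
      Tendsto f atTop (nhds 0) := by
    intro f hf
    have h2 : Tendsto (fun t => f t ^ 2) atTop (nhds 0) :=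
      tendsto_of_tendsto_of_tendsto_of_le_of_le tendsto_const_nhds hS
        (fun t => sq_nonneg _) hf
    rw [tendsto_zero_iff_abs_tendsto_zero]
    have hs := (Real.continuous_sqrt.tendsto 0).comp h2
    simpa [Function.comp_def, Real.sqrt_sq_eq_abs] using hs
  exact ⟨⟨V 0 * R / (D * (η^2*(1-η)^2)), hC0, hbound⟩,
    sq0 ψ (fun t => by nlinarith [sq_nonneg (φ t), sq_nonneg (θ t)]),
    sq0 φ (fun t => by nlinarith [sq_nonneg (ψ t), sq_nonneg (θ t)]),
    sq0 θ (fun t => by nlinarith [sq_nonneg (ψ t), sq_nonneg (φ t)])⟩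
end
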